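/- Let 𝔸 be a relational structure with a sequence of subsets A = A_0 ⊃ A_1 ⊃ ⋯ ⊃ A_n ≠ ∅ and homomorphisms φ_i from 𝔸_{i−1} := 𝔸[A_{i−1}] to 𝔸_i := 𝔸[A_i] with φ_i(A_{i−1}) = A_i for 1 ≤ i ≤ n, and let 𝔹 be a structure over the same vocabulary. Then every elementary homomorphism from 𝔸_i to 𝔹 with i < n has exactly one parent, and no homomorphism from 𝔸_n to 𝔹 has a parent. -/

import Mathlib

/-- A relational structure over a vocabulary `σ` (with arity function `ar`)
on a carrier type `V`: a universe together with a relation for each symbol,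
all of whose tuples take values in the universe. -/
structure Strc (σ : Type) (ar : σ → ℕ) (V : Type) where
  univ : Set V
  rel : ∀ R : σ, Set (Fin (ar R) → V)
  mem_univ : ∀ R, ∀ t ∈ rel R, ∀ i, t i ∈ univ

/-- `f` is a homomorphism from `A` to `B`. -/
def IsHom {σ : Type} {ar : σ → ℕ} {V W : Type}
    (A : Strc σ ar V) (B : Strc σ ar W) (f : V → W) : Prop :=
  Set.MapsTo f A.univ B.univ ∧ ∀ R, ∀ t ∈ A.rel R, (fun i => f (t i)) ∈ B.rel R

/-- The induced substructure `A[X]` (kept on the same ambient carrier):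
its universe is `X` and its relations consist of those tuples of `A` all of
whose entries lie in `X`. -/
def Strc.induce {σ : Type} {ar : σ → ℕ} {V : Type} (A : Strc σ ar V) (X : Set V) :
    Strc σ ar V where
  univ := X
  rel := fun R => {t | t ∈ A.rel R ∧ ∀ i, t i ∈ X}
  mem_univ := fun _ _ ht i => ht.2 i

/-- `chain φ t = φ_t ∘ ⋯ ∘ φ_1` (and `chain φ 0 = id`). -/
def chain {V : Type} (φ : ℕ → V → V) : ℕ → V → V
  | 0 => id
  | t + 1 => φ (t + 1) ∘ chain φ t

/-- `chainSeg φ a m = φ_{a+m} ∘ ⋯ ∘ φ_{a+1}` (and `chainSeg φ a 0 = id`). -/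
def chainSeg {V : Type} (φ : ℕ → V → V) (a : ℕ) : ℕ → V → V
  | 0 => id
  | m + 1 => φ (a + m + 1) ∘ chainSeg φ a m

/-- A homomorphism `ψ` from `𝔸_t = 𝔸[A t]` to `𝔹` is reducible if `t < n` and
it can be written as `ψ = ψ' ∘ φ_{t+1}` (on `A t`) for some homomorphism `ψ'`
from `𝔸_{t+1}` to `𝔹`. -/
def Reducible {σ : Type} {ar : σ → ℕ} {V W : Type}
    (𝔸 : Strc σ ar V) (𝔹 : Strc σ ar W) (A : ℕ → Set V) (φ : ℕ → V → V) (n : ℕ)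
    (t : ℕ) (ψ : V → W) : Prop :=
  t < n ∧ ∃ ψ' : V → W, IsHom (𝔸.induce (A (t + 1))) 𝔹 ψ' ∧
    Set.EqOn ψ (ψ' ∘ φ (t + 1)) (A t)

/-- A homomorphism `ψ` from `𝔸_t` to `𝔹` is elementary if it is not reducible. -/
def Elementary {σ : Type} {ar : σ → ℕ} {V W : Type}
    (𝔸 : Strc σ ar V) (𝔹 : Strc σ ar W) (A : ℕ → Set V) (φ : ℕ → V → V) (n : ℕ)
    (t : ℕ) (ψ : V → W) : Prop :=
  ¬ Reducible 𝔸 𝔹 A φ n t ψ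

/-- `f` (a homomorphism from `𝔸` to `𝔹`) can be written as
`f = ψ ∘ φ_t ∘ ⋯ ∘ φ_1` for some homomorphism `ψ` from `𝔸_t` to `𝔹`
(equality as maps on the universe of `𝔸`). -/
def WritableAt {σ : Type} {ar : σ → ℕ} {V W : Type}
    (𝔸 : Strc σ ar V) (𝔹 : Strc σ ar W) (A : ℕ → Set V) (φ : ℕ → V → V)
    (t : ℕ) (f : V → W) : Prop :=
  ∃ ψ : V → W, IsHom (𝔸.induce (A t)) 𝔹 ψ ∧ Set.EqOn f (ψ ∘ chain φ t) 𝔸.univ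

/-- The index of `f` is exactly `t`: `t` is the largest `s ≤ n` such that `f`
can be written as `ψ ∘ φ_s ∘ ⋯ ∘ φ_1`. -/
def HasIndex {σ : Type} {ar : σ → ℕ} {V W : Type}
    (𝔸 : Strc σ ar V) (𝔹 : Strc σ ar W) (A : ℕ → Set V) (φ : ℕ → V → V) (n : ℕ)
    (f : V → W) (t : ℕ) : Prop :=
  t ≤ n ∧ WritableAt 𝔸 𝔹 A φ t f ∧
    ∀ s ≤ n, WritableAt 𝔸 𝔹 A φ s f → s ≤ t

/-- `ψ`, an elementary homomorphism from `𝔸_j` to `𝔹` with `j > i`, is the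
parent of the (elementary) homomorphism `f` from `𝔸_i` to `𝔹` if the
restriction of `f` to `A (i+1)` can be written as `ψ ∘ φ_j ∘ ⋯ ∘ φ_{i+2}`. -/
def IsParent {σ : Type} {ar : σ → ℕ} {V W : Type}
    (𝔸 : Strc σ ar V) (𝔹 : Strc σ ar W) (A : ℕ → Set V) (φ : ℕ → V → V) (n : ℕ)
    (j : ℕ) (ψ : V → W) (i : ℕ) (f : V → W) : Prop :=
  i < j ∧ j ≤ n ∧ IsHom (𝔸.induce (A j)) 𝔹 ψ ∧ Elementary 𝔸 𝔹 A φ n j ψ ∧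
    Set.EqOn f (ψ ∘ chainSeg φ (i + 1) (j - (i + 1))) (A (i + 1))

/-!
Say that `f` factors at `j > i` if its restriction to `A_{i+1}` is `ψ ∘ φ_j ∘ ⋯ ∘ φ_{i+2}` for a
homomorphism `ψ` from `𝔸_j`. The largest such `j ≤ n` carries a parent: were its `ψ` reducible,
`f` would factor at `j + 1`. Since every `φ_k` maps `A_{k-1}` onto `A_k`, a factorisation through
`A_{j₁}` determines `ψ` on `A_{j₁}`; so two parents at `j₁ ≤ j₂` satisfy
`ψ₁ = ψ₂ ∘ φ_{j₂} ∘ ⋯ ∘ φ_{j₁+1}` on `A_{j₁}`, which makes `ψ₁` reducible unless `j₁ = j₂`,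
and then `ψ₁ = ψ₂` on `A_{j₁}`.
-/

section

variable {σ : Type} {ar : σ → ℕ} {U V W : Type}

theorem IsHom.comp {A : Strc σ ar U} {B : Strc σ ar V} {C : Strc σ ar W} {f : U → V}
    {g : V → W} (hg : IsHom B C g) (hf : IsHom A B f) : IsHom A C (g ∘ f) :=
  ⟨hg.1.comp hf.1, fun R t ht => hg.2 R _ (hf.2 R t ht)⟩

theorem IsHom.induce_mono {𝔸 : Strc σ ar V} {𝔹 : Strc σ ar W} {X Y : Set V} {f : V → W}
    (hXY : X ⊆ Y) (hf : IsHom (𝔸.induce Y) 𝔹 f) : IsHom (𝔸.induce X) 𝔹 f :=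
  ⟨hf.1.mono_left hXY, fun R t ht => hf.2 R t ⟨ht.1, fun k => hXY (ht.2 k)⟩⟩

end

section chainSeg

variable {V : Type} (φ : ℕ → V → V)

theorem chainSeg_zero (a : ℕ) : chainSeg φ a 0 = id := rfl

theorem chainSeg_one (a : ℕ) : chainSeg φ a 1 = φ (a + 1) := rfl

theorem chainSeg_add (a m k : ℕ) :
    chainSeg φ a (m + k) = chainSeg φ (a + m) k ∘ chainSeg φ a m := by
  induction k with
  | zero => rfl
  | succ k ih =>
    rw [← add_assoc, chainSeg, ih, chainSeg, add_assoc a m k]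
    rfl

theorem chainSeg_sub_trans {a b c : ℕ} (hab : a ≤ b) (hbc : b ≤ c) :
    chainSeg φ a (c - a) = chainSeg φ b (c - b) ∘ chainSeg φ a (b - a) := by
  have h := chainSeg_add φ a (b - a) (c - b)
  rwa [Nat.add_sub_cancel' hab, add_comm, Nat.sub_add_sub_cancel hbc hab] at h

theorem chainSeg_sub_succ_left {a b : ℕ} (hab : a < b) :
    chainSeg φ a (b - a) = chainSeg φ (a + 1) (b - (a + 1)) ∘ φ (a + 1) := by
  rw [chainSeg_sub_trans φ (Nat.le_add_right a 1) hab, Nat.add_sub_cancel_left, chainSeg_one]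

theorem chainSeg_sub_succ_right {a b : ℕ} (hab : a ≤ b) :
    chainSeg φ a (b + 1 - a) = φ (b + 1) ∘ chainSeg φ a (b - a) := by
  rw [chainSeg_sub_trans φ hab (Nat.le_add_right b 1), Nat.add_sub_cancel_left, chainSeg_one]

variable {A : ℕ → Set V} {n : ℕ}

theorem image_chainSeg (himg : ∀ i < n, φ (i + 1) '' A i = A (i + 1)) {a b : ℕ} (hab : a ≤ b)
    (hbn : b ≤ n) : chainSeg φ a (b - a) '' A a = A b := by
  induction b, hab using Nat.le_induction with
  | base => rw [Nat.sub_self, chainSeg_zero, Set.image_id]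
  | succ b hab ih =>
    rw [chainSeg_sub_succ_right φ hab, Set.image_comp, ih (by omega), himg b hbn]

theorem isHom_chainSeg {σ : Type} {ar : σ → ℕ} {𝔸 : Strc σ ar V}
    (hhom : ∀ i < n, IsHom (𝔸.induce (A i)) (𝔸.induce (A (i + 1))) (φ (i + 1)))
    {a b : ℕ} (hab : a ≤ b) (hbn : b ≤ n) :
    IsHom (𝔸.induce (A a)) (𝔸.induce (A b)) (chainSeg φ a (b - a)) := by
  induction b, hab using Nat.le_induction with
  | base => rw [Nat.sub_self]; exact ⟨fun _ hx => hx, fun _ _ ht => ht⟩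
  | succ b hab ih => rw [chainSeg_sub_succ_right φ hab]; exact (hhom b hbn).comp (ih (by omega))

end chainSeg

def FactorsAt {σ : Type} {ar : σ → ℕ} {V W : Type}
    (𝔸 : Strc σ ar V) (𝔹 : Strc σ ar W) (A : ℕ → Set V) (φ : ℕ → V → V)
    (i j : ℕ) (f : V → W) : Prop :=
  ∃ ψ : V → W, IsHom (𝔸.induce (A j)) 𝔹 ψ ∧
    Set.EqOn f (ψ ∘ chainSeg φ (i + 1) (j - (i + 1))) (A (i + 1))

section parent

variable {σ : Type} {ar : σ → ℕ} {V W : Type} {𝔸 : Strc σ ar V} {𝔹 : Strc σ ar W}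
  {A : ℕ → Set V} {φ : ℕ → V → V} {n : ℕ}

theorem eqOn_of_eqOn_comp_chainSeg (himg : ∀ i < n, φ (i + 1) '' A i = A (i + 1))
    {a j₁ j₂ : ℕ} (h₁ : a ≤ j₁) (h₁₂ : j₁ ≤ j₂) (h₂ : j₂ ≤ n) {ψ₁ ψ₂ : V → W}
    (h : Set.EqOn (ψ₁ ∘ chainSeg φ a (j₁ - a)) (ψ₂ ∘ chainSeg φ a (j₂ - a)) (A a)) :
    Set.EqOn ψ₁ (ψ₂ ∘ chainSeg φ j₁ (j₂ - j₁)) (A j₁) := by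
  rw [chainSeg_sub_trans φ h₁ h₁₂, ← Function.comp_assoc, Set.eqOn_comp_right_iff,
    image_chainSeg φ himg h₁ (h₁₂.trans h₂)] at h
  exact h

theorem factorsAt_succ_of_reducible (himg : ∀ i < n, φ (i + 1) '' A i = A (i + 1))
    {i j : ℕ} (hij : i < j) {f ψ : V → W}
    (hf : Set.EqOn f (ψ ∘ chainSeg φ (i + 1) (j - (i + 1))) (A (i + 1)))
    (hred : Reducible 𝔸 𝔹 A φ n j ψ) : FactorsAt 𝔸 𝔹 A φ i (j + 1) f := by
  obtain ⟨hjn, ψ', hψ', hψψ'⟩ := hred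
  have hmaps : Set.MapsTo (chainSeg φ (i + 1) (j - (i + 1))) (A (i + 1)) (A j) := by
    rw [← image_chainSeg φ himg hij hjn.le]
    exact Set.mapsTo_image _ _
  refine ⟨ψ', hψ', ?_⟩
  rw [chainSeg_sub_succ_right φ hij, ← Function.comp_assoc]
  exact hf.trans (hψψ'.comp_right hmaps)

theorem exists_isParent (himg : ∀ i < n, φ (i + 1) '' A i = A (i + 1)) {i : ℕ} (hi : i < n)
    (hsub : A (i + 1) ⊆ A i) {f : V → W} (hf : IsHom (𝔸.induce (A i)) 𝔹 f) :
    ∃ j ψ, IsParent 𝔸 𝔹 A φ n j ψ i f := by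
  classical
  let P j := i < j ∧ FactorsAt 𝔸 𝔹 A φ i j f
  have hP : P (i + 1) := ⟨i.lt_succ_self, f, hf.induce_mono hsub, by
    rw [Nat.sub_self, chainSeg_zero]; exact Set.eqOn_refl _ _⟩
  obtain ⟨hij, ψ, hψ, hfψ⟩ := Nat.findGreatest_spec hi hP
  refine ⟨_, ψ, hij, Nat.findGreatest_le n, hψ, fun hred => ?_, hfψ⟩
  have := Nat.le_findGreatest (P := P) hred.1 ⟨hij.trans (Nat.lt_succ_self _),
    factorsAt_succ_of_reducible himg hij hfψ hred⟩
  omega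

theorem IsParent.le_of_isParent
    (hhom : ∀ i < n, IsHom (𝔸.induce (A i)) (𝔸.induce (A (i + 1))) (φ (i + 1)))
    (himg : ∀ i < n, φ (i + 1) '' A i = A (i + 1)) {i j₁ j₂ : ℕ} {f ψ₁ ψ₂ : V → W}
    (h₁ : IsParent 𝔸 𝔹 A φ n j₁ ψ₁ i f) (h₂ : IsParent 𝔸 𝔹 A φ n j₂ ψ₂ i f) : j₂ ≤ j₁ := by
  obtain ⟨hij₁, -, -, hel₁, hf₁⟩ := h₁
  obtain ⟨-, hj₂n, hψ₂, -, hf₂⟩ := h₂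
  by_contra! hlt
  refine hel₁ ⟨hlt.trans_le hj₂n, ψ₂ ∘ chainSeg φ (j₁ + 1) (j₂ - (j₁ + 1)),
    hψ₂.comp (isHom_chainSeg φ hhom hlt hj₂n), ?_⟩
  rw [Function.comp_assoc, ← chainSeg_sub_succ_left φ hlt]
  exact eqOn_of_eqOn_comp_chainSeg himg hij₁ hlt.le hj₂n (hf₁.symm.trans hf₂)

theorem IsParent.unique
    (hhom : ∀ i < n, IsHom (𝔸.induce (A i)) (𝔸.induce (A (i + 1))) (φ (i + 1)))
    (himg : ∀ i < n, φ (i + 1) '' A i = A (i + 1)) {i j₁ j₂ : ℕ} {f ψ₁ ψ₂ : V → W}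
    (h₁ : IsParent 𝔸 𝔹 A φ n j₁ ψ₁ i f) (h₂ : IsParent 𝔸 𝔹 A φ n j₂ ψ₂ i f) :
    j₁ = j₂ ∧ Set.EqOn ψ₁ ψ₂ (A j₁) := by
  obtain rfl := le_antisymm (h₂.le_of_isParent hhom himg h₁) (h₁.le_of_isParent hhom himg h₂)
  have := eqOn_of_eqOn_comp_chainSeg himg h₁.1 le_rfl h₁.2.1 (h₁.2.2.2.2.symm.trans h₂.2.2.2.2)
  rw [Nat.sub_self, chainSeg_zero] at this
  exact ⟨rfl, this⟩

end parent

theorem parent_unique_general {σ V W : Type}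
    {ar : σ → ℕ} (𝔸 : Strc σ ar V) (𝔹 : Strc σ ar W)
    (n : ℕ) (A : ℕ → Set V) (φ : ℕ → V → V)
    (hdec : ∀ i < n, A (i + 1) ⊂ A i)
    (hhom : ∀ i < n, IsHom (𝔸.induce (A i)) (𝔸.induce (A (i + 1))) (φ (i + 1)))
    (himg : ∀ i < n, φ (i + 1) '' A i = A (i + 1)) :
    (∀ i < n, ∀ f : V → W, IsHom (𝔸.induce (A i)) 𝔹 f →
        Elementary 𝔸 𝔹 A φ n i f →
        (∃ j ψ, IsParent 𝔸 𝔹 A φ n j ψ i f) ∧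
        (∀ j₁ ψ₁ j₂ ψ₂, IsParent 𝔸 𝔹 A φ n j₁ ψ₁ i f →
          IsParent 𝔸 𝔹 A φ n j₂ ψ₂ i f → j₁ = j₂ ∧ Set.EqOn ψ₁ ψ₂ (A j₁))) ∧
    (∀ f : V → W, IsHom (𝔸.induce (A n)) 𝔹 f →
        ¬ ∃ j ψ, IsParent 𝔸 𝔹 A φ n j ψ n f) :=
  ⟨fun i hi _ hf _ => ⟨exists_isParent himg hi (hdec i hi).subset hf,
      fun _ _ _ _ h₁ h₂ => h₁.unique hhom himg h₂⟩,
    fun _ _ ⟨_, _, hp⟩ => (hp.1.trans_le hp.2.1).false⟩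

/-- every elementary homomorphism from `𝔸_i` to `𝔹` with `i < n`
has exactly one parent (unique as a homomorphism, i.e. up to its values on
`A j`), and no homomorphism from `𝔸_n` to `𝔹` has a parent. -/
theorem parent_unique {σ V W : Type} [Finite σ] [Finite V] [Finite W]
    {ar : σ → ℕ} (𝔸 : Strc σ ar V) (𝔹 : Strc σ ar W)
    (n : ℕ) (A : ℕ → Set V) (φ : ℕ → V → V)
    (hA0 : A 0 = 𝔸.univ)
    (hdec : ∀ i < n, A (i + 1) ⊂ A i)
    (hne : (A n).Nonempty)
    (hhom : ∀ i < n, IsHom (𝔸.induce (A i)) (𝔸.induce (A (i + 1))) (φ (i + 1)))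
    (himg : ∀ i < n, φ (i + 1) '' A i = A (i + 1)) :
    (∀ i < n, ∀ f : V → W, IsHom (𝔸.induce (A i)) 𝔹 f →
        Elementary 𝔸 𝔹 A φ n i f →
        (∃ j ψ, IsParent 𝔸 𝔹 A φ n j ψ i f) ∧
        (∀ j₁ ψ₁ j₂ ψ₂, IsParent 𝔸 𝔹 A φ n j₁ ψ₁ i f →
          IsParent 𝔸 𝔹 A φ n j₂ ψ₂ i f → j₁ = j₂ ∧ Set.EqOn ψ₁ ψ₂ (A j₁))) ∧
    (∀ f : V → W, IsHom (𝔸.induce (A n)) 𝔹 f →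
        ¬ ∃ j ψ, IsParent 𝔸 𝔹 A φ n j ψ n f) :=
  parent_unique_general 𝔸 𝔹 n A φ hdec hhom himg
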